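/- Let R be a commutative Noetherian ring, I and J ideals of R, M an R-module, and i a non-negative integer. Then Supp(H^i_{I,J}(M)) ⊆ ⋃_{a ∈ W̃(I,J)} Supp(H^i_a(M)), where the union is over all ideals a in W̃(I,J) and H^i_a denotes ordinary local cohomology with respect to a. -/

import Mathlib

/-!
A class in `H^i_{I,J}(M)` is represented by a cocycle `z` of `Γ_{I,J}(E)` for an injective
resolution `E` of `M`. Its annihilator `a = Ann(z)` lies in `W̃(I,J)`, and `z` is already a cocycle
of the subcomplex `Γ_a(E) ⊆ Γ_{I,J}(E)`. Hence every element of `H^i_{I,J}(M)` is the image of an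
element of some `H^i_a(M)`, `a ∈ W̃(I,J)`, under the map induced by `Γ_a ⊆ Γ_{I,J}`; since
annihilators of elements can only grow under linear maps, this passes to supports.
-/

open CategoryTheory

/-- The `(I,J)`-torsion submodule `Γ_{I,J}(M) = {x ∈ M : Iⁿ x ⊆ J x for n ≫ 1}`;
note that `Iⁿ x ⊆ J x` is equivalent to `Iⁿ ≤ J + ann_R(x)`. -/
def pairTorsion {R : Type} [CommRing R] (I J : Ideal R) (M : Type) [AddCommGroup M]
    [Module R M] : Submodule R M where
  carrier := {x | ∃ n : ℕ, I ^ n ≤ J + Ideal.torsionOf R M x}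
  zero_mem' := ⟨0, by simp [Ideal.torsionOf_zero]⟩
  add_mem' := by
    rintro x y ⟨n, hn⟩ ⟨m, hm⟩
    refine ⟨n + m, ?_⟩
    rw [pow_add]
    refine le_trans (Ideal.mul_mono hn hm) (Ideal.mul_le.mpr fun r hr s hs => ?_)
    rw [Submodule.add_eq_sup, Submodule.mem_sup] at hr hs ⊢
    obtain ⟨j1, hj1, a, ha, rfl⟩ := hr
    obtain ⟨j2, hj2, b, hb, rfl⟩ := hs
    refine ⟨j1 * (j2 + b) + a * j2, ?_, a * b, ?_, by ring⟩
    · exact Ideal.add_mem _ (Ideal.mul_mem_right _ _ hj1) (Ideal.mul_mem_left _ _ hj2)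
    · rw [Ideal.mem_torsionOf_iff] at ha hb ⊢
      have h1 : (a * b) • x = 0 := by rw [mul_comm, mul_smul, ha, smul_zero]
      have h2 : (a * b) • y = 0 := by rw [mul_smul, hb, smul_zero]
      rw [smul_add, h1, h2, add_zero]
  smul_mem' := by
    rintro c x ⟨n, hn⟩
    refine ⟨n, le_trans hn (sup_le_sup_left ?_ _)⟩
    intro r hr
    rw [Ideal.mem_torsionOf_iff] at hr ⊢
    rw [smul_comm, hr, smul_zero]

/-- The `(I,J)`-torsion functor `Γ_{I,J}` on the category of `R`-modules. -/
def pairGamma {R : Type} [CommRing R] (I J : Ideal R) : ModuleCat R ⥤ ModuleCat R where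
  obj M := ModuleCat.of R (pairTorsion I J M)
  map {M N} f := ModuleCat.ofHom (LinearMap.restrict f.hom (fun x (hx : x ∈ pairTorsion I J M) => by
    obtain ⟨n, hn⟩ := hx
    exact ⟨n, le_trans hn (sup_le_sup_left (fun r hr => by
      rw [Ideal.mem_torsionOf_iff] at hr ⊢
      rw [← map_smul, hr, map_zero]) _)⟩))
  map_id _ := ModuleCat.hom_ext (LinearMap.ext fun _ => Subtype.ext rfl)
  map_comp _ _ := ModuleCat.hom_ext (LinearMap.ext fun _ => Subtype.ext rfl)

instance {R : Type} [CommRing R] (I J : Ideal R) : (pairGamma I J).Additive where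
  map_add := ModuleCat.hom_ext (LinearMap.ext fun _ => Subtype.ext rfl)

/-- The local cohomology functor `H^i_{I,J}` with respect to the pair of ideals `(I,J)`:
the `i`-th right derived functor of `Γ_{I,J}`.  Ordinary local cohomology `H^i_I` is the
case `J = ⊥`. -/
noncomputable def pairLocalCohomology {R : Type} [CommRing R] (I J : Ideal R) (i : ℕ) :
    ModuleCat R ⥤ ModuleCat R :=
  (pairGamma I J).rightDerived i

/-- The cohomological dimension `cd(I,J,M) = sup{i : H^i_{I,J}(M) ≠ 0}` (with `sup ∅ = ⊥`). -/
noncomputable def pairCohomologicalDim {R : Type} [CommRing R] (I J : Ideal R)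
    (M : ModuleCat R) : WithBot ℕ∞ :=
  sSup {d : WithBot ℕ∞ | ∃ i : ℕ, d = (i : ℕ∞) ∧ Nontrivial ((pairLocalCohomology I J i).obj M)}

/-- The set of attached prime ideals of an `R`-module `M`: a prime `p` is attached to `M`
if `p = Ann_R(M/N)` for some submodule `N` of `M`. -/
def attachedPrimes (R M : Type) [CommRing R] [AddCommGroup M] [Module R M] : Set (Ideal R) :=
  {p | p.IsPrime ∧ ∃ N : Submodule R M, p = Module.annihilator R (M ⧸ N)}

/-- A module is secondary if it is nonzero and every `r : R` acts on it either surjectively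
or nilpotently. -/
def IsSecondary (R M : Type) [CommRing R] [AddCommGroup M] [Module R M] : Prop :=
  Nontrivial M ∧ ∀ r : R, Function.Surjective (fun m : M => r • m) ∨ ∃ n : ℕ, ∀ m : M, r ^ n • m = 0

/-- A module is representable if it admits a secondary representation, i.e. it is a finite
sum of secondary submodules. -/
def IsRepresentable (R M : Type) [CommRing R] [AddCommGroup M] [Module R M] : Prop :=
  ∃ s : Finset (Submodule R M), (∀ N ∈ s, IsSecondary R N) ∧ s.sup id = ⊤

/-- The (Krull) dimension of a module, `dim M = dim (R / Ann_R M)`. -/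
noncomputable def moduleDim (R M : Type) [CommRing R] [AddCommGroup M] [Module R M] :
    WithBot ℕ∞ :=
  ringKrullDim (R ⧸ Module.annihilator R M)

/-- A submodule is essential if it meets every nonzero submodule nontrivially. -/
def IsEssentialSubmodule {R E : Type} [CommRing R] [AddCommGroup E] [Module R E]
    (N : Submodule R E) : Prop :=
  ∀ P : Submodule R E, P ≠ ⊥ → N ⊓ P ≠ ⊥

/-- `E` is an injective hull of `K` over `R`: `E` is an injective `R`-module containing a
copy of `K` as an essential submodule.  The Matlis dual of an `R`-module `X` (for local `R`
with residue field `K`) is then `D_R(X) = Hom_R(X, E)`. -/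
def IsInjectiveHullOf (R K E : Type) [CommRing R] [AddCommGroup K] [Module R K]
    [AddCommGroup E] [Module R E] : Prop :=
  Module.Injective R E ∧
    ∃ f : K →ₗ[R] E, Function.Injective f ∧ IsEssentialSubmodule (LinearMap.range f)

/-- `W(I,J)`: the set of prime ideals `p` with `Iⁿ ⊆ p + J` for some `n ≥ 1`. -/
def pairW {R : Type} [CommRing R] (I J : Ideal R) : Set (Ideal R) :=
  {p | p.IsPrime ∧ ∃ n : ℕ, 1 ≤ n ∧ I ^ n ≤ p + J}

/-- `W̃(I,J)`: the set of ideals `a` with `Iⁿ ⊆ a + J` for some `n ≥ 1`. -/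
def pairWtilde {R : Type} [CommRing R] (I J : Ideal R) : Set (Ideal R) :=
  {a | ∃ n : ℕ, 1 ≤ n ∧ I ^ n ≤ a + J}

namespace Module

variable {R N : Type*} [CommRing R] [AddCommGroup N] [Module R N]

lemma support_subset_iUnion_of_forall_mem_range {ι : Type*} {M : ι → Type*}
    [∀ k, AddCommGroup (M k)] [∀ k, Module R (M k)] (f : ∀ k, M k →ₗ[R] N)
    (hf : ∀ x, ∃ k, x ∈ LinearMap.range (f k)) :
    support R N ⊆ ⋃ k, support R (M k) := by
  intro p hp
  obtain ⟨x, hx⟩ := mem_support_iff'.mp hp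
  obtain ⟨k, y, rfl⟩ := hf x
  refine Set.mem_iUnion.mpr ⟨k, mem_support_iff'.mpr ⟨y, fun r hr hry => hx r hr ?_⟩⟩
  rw [← map_smul, hry, map_zero]

end Module

section PairTorsion

variable {R : Type} [CommRing R] {I J a : Ideal R}

lemma pairTorsion_bot_le_of_mem_pairWtilde (ha : a ∈ pairWtilde I J)
    (M : Type) [AddCommGroup M] [Module R M] :
    pairTorsion a ⊥ M ≤ pairTorsion I J M := by
  obtain ⟨n, -, hn⟩ := ha
  rintro x ⟨m, hm⟩
  rw [Submodule.add_eq_sup, bot_sup_eq] at hm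
  refine ⟨n * (m + 1), ?_⟩
  calc I ^ (n * (m + 1)) = (I ^ n) ^ (m + 1) := pow_mul I n (m + 1)
    _ ≤ (a ⊔ J) ^ (m + 1) := Ideal.pow_right_mono hn _
    _ ≤ a ^ m ⊔ J ^ 1 := Ideal.sup_pow_add_le_pow_sup_pow
    _ ≤ J + Ideal.torsionOf R M x := by
      rw [pow_one, sup_comm]
      exact sup_le_sup_left hm J

lemma torsionOf_mem_pairWtilde {M : Type} [AddCommGroup M] [Module R M] {x : M}
    (hx : x ∈ pairTorsion I J M) : Ideal.torsionOf R M x ∈ pairWtilde I J := by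
  obtain ⟨n, hn⟩ := hx
  exact ⟨n + 1, Nat.le_add_left 1 n,
    (Ideal.pow_le_pow_right n.le_succ).trans (hn.trans_eq (add_comm _ _))⟩

lemma mem_pairTorsion_torsionOf_bot {M : Type} [AddCommGroup M] [Module R M] (x : M) :
    x ∈ pairTorsion (Ideal.torsionOf R M x) ⊥ M :=
  ⟨1, by rw [pow_one, Submodule.add_eq_sup, bot_sup_eq]⟩

def pairGammaBotToPairGamma (ha : a ∈ pairWtilde I J) : pairGamma a ⊥ ⟶ pairGamma I J where
  app M := ModuleCat.ofHom (Submodule.inclusion (pairTorsion_bot_le_of_mem_pairWtilde ha M))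

end PairTorsion

section Cohomology

open HomologicalComplex

variable {R : Type} [CommRing R]

lemma ModuleCat.homologyπ_mem_range_homologyMap {ι : Type*} {c : ComplexShape ι}
    {K L : HomologicalComplex (ModuleCat R) c} (φ : K ⟶ L) {i j : ι} (hij : c.next i = j)
    (w : K.X i) (hw : K.d i j w = 0) (z : L.cycles i) (hz : L.iCycles i z = φ.f i w) :
    L.homologyπ i z ∈ LinearMap.range (homologyMap φ i).hom := by
  have hw' : K.iCycles i (K.cyclesMk w j hij hw) = w := K.i_cyclesMk w j hij hw
  have hcycles : cyclesMap φ i (K.cyclesMk w j hij hw) = z := by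
    apply (ModuleCat.mono_iff_injective (L.iCycles i)).mp inferInstance
    rw [← ConcreteCategory.comp_apply, cyclesMap_i, ConcreteCategory.comp_apply, hw', hz]
  refine ⟨K.homologyπ i (K.cyclesMk w j hij hw), ?_⟩
  rw [← hcycles, ← ConcreteCategory.comp_apply, homologyπ_naturality]
  rfl

lemma exists_mem_range_homologyMap_pairGammaBotToPairGamma (I J : Ideal R)
    (E : CochainComplex (ModuleCat R) ℕ) (i : ℕ)
    (y : (((pairGamma I J).mapHomologicalComplex _).obj E).homology i) :
    ∃ a, ∃ ha : a ∈ pairWtilde I J, y ∈ LinearMap.range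
      (homologyMap ((NatTrans.mapHomologicalComplex (pairGammaBotToPairGamma ha) _).app E) i).hom := by
  obtain ⟨z, rfl⟩ := (ModuleCat.epi_iff_surjective (homologyπ _ i)).mp inferInstance y
  set x : pairTorsion I J (E.X i) :=
    (((pairGamma I J).mapHomologicalComplex _).obj E).iCycles i z
  have hdx : E.d i (i + 1) x.1 = 0 := by
    have h := ConcreteCategory.congr_hom
      ((((pairGamma I J).mapHomologicalComplex _).obj E).iCycles_d i (i + 1)) z
    exact congrArg Subtype.val h
  have ha := torsionOf_mem_pairWtilde x.2
  exact ⟨_, ha, ModuleCat.homologyπ_mem_range_homologyMap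
    ((NatTrans.mapHomologicalComplex (pairGammaBotToPairGamma ha) _).app E)
    ((ComplexShape.up ℕ).next_eq' rfl)
    (⟨x, mem_pairTorsion_torsionOf_bot x.1⟩ : pairTorsion _ ⊥ (E.X i)) (Subtype.ext hdx) z rfl⟩

lemma CategoryTheory.NatTrans.mem_range_rightDerived_app {C : Type*} [Category C] [Abelian C]
    [HasInjectiveResolutions C] {F G : C ⥤ ModuleCat R} [F.Additive] [G.Additive] (α : F ⟶ G)
    {X : C} (P : InjectiveResolution X) (n : ℕ) (x : (G.rightDerived n).obj X)
    (hx : (P.isoRightDerivedObj G n).hom x ∈ LinearMap.range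
      (homologyMap ((NatTrans.mapHomologicalComplex α _).app P.cocomplex) n).hom) :
    x ∈ LinearMap.range ((NatTrans.rightDerived α n).app X).hom := by
  obtain ⟨y, hy⟩ := hx
  have key : (P.isoRightDerivedObj F n).inv ≫ (NatTrans.rightDerived α n).app X =
      homologyMap ((NatTrans.mapHomologicalComplex α _).app P.cocomplex) n ≫
        (P.isoRightDerivedObj G n).inv := by
    rw [InjectiveResolution.rightDerived_app_eq α P n, Iso.inv_hom_id_assoc]
    rfl
  refine ⟨(P.isoRightDerivedObj F n).inv y, ?_⟩
  change ((P.isoRightDerivedObj F n).inv ≫ (NatTrans.rightDerived α n).app X) y = x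
  rw [key]
  change (P.isoRightDerivedObj G n).inv.hom
    ((homologyMap ((NatTrans.mapHomologicalComplex α _).app P.cocomplex) n).hom y) = x
  rw [hy]
  exact Iso.hom_inv_id_apply _ x

lemma exists_mem_range_rightDerived_pairGammaBotToPairGamma (I J : Ideal R) (M : ModuleCat R) (i : ℕ) (x : (pairLocalCohomology I J i).obj M) :
    ∃ a : pairWtilde I J,
      x ∈ LinearMap.range ((NatTrans.rightDerived (pairGammaBotToPairGamma a.2) i).app M).hom := by
  let P := InjectiveResolution.of M
  obtain ⟨a, ha, hx⟩ := exists_mem_range_homologyMap_pairGammaBotToPairGamma I J P.cocomplex i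
    ((P.isoRightDerivedObj (pairGamma I J) i).hom x)
  exact ⟨⟨a, ha⟩, NatTrans.mem_range_rightDerived_app _ P i x hx⟩

end Cohomology

theorem supp_pair_local_cohomology_subset_iUnion_general
    (R : Type) [CommRing R] (I J : Ideal R)
    (M : Type) [AddCommGroup M] [Module R M] (i : ℕ) :
    Module.support R ((pairLocalCohomology I J i).obj (ModuleCat.of R M)) ⊆
      ⋃ a ∈ pairWtilde I J,
        Module.support R ((pairLocalCohomology a ⊥ i).obj (ModuleCat.of R M)) := by
  rw [Set.biUnion_eq_iUnion]
  exact Module.support_subset_iUnion_of_forall_mem_range _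
    (exists_mem_range_rightDerived_pairGammaBotToPairGamma I J (ModuleCat.of R M) i)

/-- **Lemma 6(i).** For any `R`-module `M` and `i ≥ 0`,
`Supp(H^i_{I,J}(M)) ⊆ ⋃_{a ∈ W̃(I,J)} Supp(H^i_a(M))`, where `H^i_a` is ordinary local
cohomology (the case `J = ⊥`). -/
theorem supp_pair_local_cohomology_subset_iUnion
    (R : Type) [CommRing R] [IsNoetherianRing R] (I J : Ideal R)
    (M : Type) [AddCommGroup M] [Module R M] (i : ℕ) :
    Module.support R ((pairLocalCohomology I J i).obj (ModuleCat.of R M)) ⊆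
      ⋃ a ∈ pairWtilde I J,
        Module.support R ((pairLocalCohomology a ⊥ i).obj (ModuleCat.of R M)) :=
  supp_pair_local_cohomology_subset_iUnion_general R I J M i
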